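/- arXiv:0910.3126 — 2 statements merged into one kernel-verified Lean document; each statement's English description precedes it below -/
import Mathlib

section
/- Let c, g₁, g₂ be real numbers and let φ, y : ℝ → ℝ be differentiable functions with φ(ξ) ≠ c for all ξ, satisfying the system φ'(ξ) = (√2/2) y(ξ) and y'(ξ) = √2 ((φ(ξ) - c)(g₁ - y(ξ)²/2 - φ(ξ)²) - 2g₂ φ(ξ)) / (φ(ξ) - c)². Then the Hamiltonian H(φ, y) = φ⁴ - (4c/3)φ³ + (4g₂ - 2g₁)φ² + 4c g₁ φ + (φ - c)² y² is constant along the solution, i.e., ξ ↦ H(φ(ξ), y(ξ)) is a constant function. -/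
/-!
Up to the positive factor `√2 / (4 (φ - c)²)`, which is defined away from the singular line,
the system is the Hamiltonian vector field `(∂H/∂y, -∂H/∂φ)`. Hence the derivative of `H`
along a solution is `∂H/∂φ · φ' + ∂H/∂y · y'`, which cancels identically.
-/

namespace DualKaupBoussinesq

noncomputable def hamiltonian (c g₁ g₂ p q : ℝ) : ℝ :=
  p ^ 4 - (4 * c / 3) * p ^ 3 + (4 * g₂ - 2 * g₁) * p ^ 2 + 4 * c * g₁ * p + (p - c) ^ 2 * q ^ 2

variable {c g₁ g₂ : ℝ}

theorem hasDerivAt_hamiltonian_comp {φ y : ℝ → ℝ} {a b ξ : ℝ}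
    (hφ : HasDerivAt φ a ξ) (hy : HasDerivAt y b ξ) :
    HasDerivAt (fun t => hamiltonian c g₁ g₂ (φ t) (y t))
      ((4 * φ ξ ^ 3 - 4 * c * φ ξ ^ 2 + 2 * (4 * g₂ - 2 * g₁) * φ ξ + 4 * c * g₁
          + 2 * (φ ξ - c) * y ξ ^ 2) * a
        + 2 * (φ ξ - c) ^ 2 * y ξ * b) ξ := by
  have hD := ((((hφ.pow 4).sub ((hφ.pow 3).const_mul (4 * c / 3))).add
    ((hφ.pow 2).const_mul (4 * g₂ - 2 * g₁))).add (hφ.const_mul (4 * c * g₁))).add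
    (((hφ.sub_const c).pow 2).mul (hy.pow 2))
  exact hD.congr_deriv (by simp only [Pi.pow_apply]; push_cast; ring)

theorem hamiltonian_orbital_derivative_eq_zero {p q : ℝ} (hp : p ≠ c) :
    (4 * p ^ 3 - 4 * c * p ^ 2 + 2 * (4 * g₂ - 2 * g₁) * p + 4 * c * g₁
          + 2 * (p - c) * q ^ 2) * (Real.sqrt 2 / 2 * q)
      + 2 * (p - c) ^ 2 * q
        * (Real.sqrt 2 * ((p - c) * (g₁ - q ^ 2 / 2 - p ^ 2) - 2 * g₂ * p) / (p - c) ^ 2)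
      = 0 := by
  have hpc : p - c ≠ 0 := sub_ne_zero.mpr hp
  field_simp
  ring

end DualKaupBoussinesq

open DualKaupBoussinesq in
/-- Along any solution `(φ, y)` of the singular travelling-wave
system `φ' = (√2/2) y`, `y' = √2((φ - c)(g₁ - y²/2 - φ²) - 2g₂φ)/(φ - c)²`
that avoids the singular line `φ = c`, the Hamiltonian
`H(φ, y) = φ⁴ - (4c/3)φ³ + (4g₂ - 2g₁)φ² + 4cg₁φ + (φ - c)²y²` is constant. -/
theorem stmt_11 (c g₁ g₂ : ℝ) (φ y : ℝ → ℝ)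
    (hφ : Differentiable ℝ φ) (hy : Differentiable ℝ y)
    (hsing : ∀ ξ : ℝ, φ ξ ≠ c)
    (heq1 : ∀ ξ : ℝ, deriv φ ξ = (Real.sqrt 2 / 2) * y ξ)
    (heq2 : ∀ ξ : ℝ, deriv y ξ =
      Real.sqrt 2 * ((φ ξ - c) * (g₁ - (y ξ) ^ 2 / 2 - (φ ξ) ^ 2) - 2 * g₂ * φ ξ)
        / (φ ξ - c) ^ 2)
    (H : ℝ → ℝ → ℝ)
    (hH : ∀ p q : ℝ, H p q = p ^ 4 - (4 * c / 3) * p ^ 3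
      + (4 * g₂ - 2 * g₁) * p ^ 2 + 4 * c * g₁ * p + (p - c) ^ 2 * q ^ 2) :
    ∀ ξ₁ ξ₂ : ℝ, H (φ ξ₁) (y ξ₁) = H (φ ξ₂) (y ξ₂) := by
  have hH' : H = hamiltonian c g₁ g₂ := by
    funext p q
    exact hH p q
  have hderiv (ξ : ℝ) : HasDerivAt (fun t => hamiltonian c g₁ g₂ (φ t) (y t)) 0 ξ := by
    have hφξ := heq1 ξ ▸ (hφ ξ).hasDerivAt
    have hyξ := heq2 ξ ▸ (hy ξ).hasDerivAt
    exact (hasDerivAt_hamiltonian_comp hφξ hyξ).congr_deriv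
      (hamiltonian_orbital_derivative_eq_zero (hsing ξ))
  subst hH'
  exact is_const_of_deriv_eq_zero (fun t => (hderiv t).differentiableAt)
    (fun t => (hderiv t).deriv)
end

section
/- Let c be a real number with √3 < c < 3, and for φ in the open interval (φ₋, c/3) with φ₋ = (c - √(6c² - 18))/3, define G(φ) = π/2 + arctan(α(φ)) + (2c/√(6c² - 18)) ln(β(φ)), where α(φ) = (3φ - c)/√(-9φ² + 6cφ + 5c² - 18) and β(φ) = (√(6c² - 18) + √(-9φ² + 6cφ + 5c² - 18))/(c - 3φ). Then G is differentiable on (φ₋, c/3) and G'(φ) = (φ - c) / ((φ - c/3)√(-φ² + (2c/3)φ + 5c²/9 - 2)) for every φ in (φ₋, c/3). -/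
/-!
With `d = √(6c² - 18)` the radicand `-9φ² + 6cφ + 5c² - 18` equals `d² - (3φ - c)²`, so `G` is
`π/2 + arctan (t / √(d² - t²))` at `t = 3φ - c` plus `(2c/d) log ((d + √(d² - u²)) / u)` at
`u = c - 3φ`. These two functions have derivatives `1 / √(d² - t²)` and `-d / (u √(d² - u²))`,
and the chain rule combines them into the claimed derivative.
-/

open Real

section SqrtSqSub

variable {d t : ℝ}

lemma hasDerivAt_sqrt_sq_sub (ht : t ^ 2 < d ^ 2) :
    HasDerivAt (fun x => √(d ^ 2 - x ^ 2)) (-t / √(d ^ 2 - t ^ 2)) t := by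
  convert ((hasDerivAt_pow 2 t).const_sub (d ^ 2)).sqrt (by linarith) using 1
  field_simp
  ring

lemma hasDerivAt_arctan_div_sqrt_sq_sub (ht : t ^ 2 < d ^ 2) :
    HasDerivAt (fun x => arctan (x / √(d ^ 2 - x ^ 2))) (1 / √(d ^ 2 - t ^ 2)) t := by
  have hpos : 0 < d ^ 2 - t ^ 2 := by linarith
  have hs : 0 < √(d ^ 2 - t ^ 2) := sqrt_pos.mpr hpos
  have hs2 : √(d ^ 2 - t ^ 2) ^ 2 = d ^ 2 - t ^ 2 := sq_sqrt hpos.le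
  have hquot : HasDerivAt (fun x => x / √(d ^ 2 - x ^ 2))
      ((1 * √(d ^ 2 - t ^ 2) - t * (-t / √(d ^ 2 - t ^ 2))) / √(d ^ 2 - t ^ 2) ^ 2) t :=
    (hasDerivAt_id' t).div (hasDerivAt_sqrt_sq_sub ht) hs.ne'
  convert hquot.arctan using 1
  field_simp
  rw [hs2]
  ring

lemma hasDerivAt_log_sqrt_sq_sub_div (ht : t ≠ 0) (htd : t ^ 2 < d ^ 2) :
    HasDerivAt (fun x => log ((d + √(d ^ 2 - x ^ 2)) / x))
      (-d / (t * √(d ^ 2 - t ^ 2))) t := by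
  have hpos : 0 < d ^ 2 - t ^ 2 := by linarith
  have hs : 0 < √(d ^ 2 - t ^ 2) := sqrt_pos.mpr hpos
  have hs2 : √(d ^ 2 - t ^ 2) ^ 2 = d ^ 2 - t ^ 2 := sq_sqrt hpos.le
  -- `d + s = 0` would force `d ^ 2 = s ^ 2 = d ^ 2 - t ^ 2`
  have hds : d + √(d ^ 2 - t ^ 2) ≠ 0 := by
    intro h
    have : d ^ 2 = d ^ 2 - t ^ 2 := by rw [← hs2, show √(d ^ 2 - t ^ 2) = -d by linarith]; ring
    exact ht (by nlinarith)
  have hquot : HasDerivAt (fun x => (d + √(d ^ 2 - x ^ 2)) / x)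
      (((-t / √(d ^ 2 - t ^ 2)) * t - (d + √(d ^ 2 - t ^ 2)) * 1) / t ^ 2) t :=
    ((hasDerivAt_sqrt_sq_sub htd).const_add d).div (hasDerivAt_id' t) ht
  convert hquot.log (div_ne_zero hds ht) using 1
  field_simp
  linear_combination hs2

end SqrtSqSub

theorem stmt_17_general (c : ℝ)
    (φm : ℝ) (hφm : φm = (c - Real.sqrt (6 * c ^ 2 - 18)) / 3)
    (α β G : ℝ → ℝ)
    (hα : ∀ φ : ℝ, α φ =
      (3 * φ - c) / Real.sqrt (-9 * φ ^ 2 + 6 * c * φ + 5 * c ^ 2 - 18))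
    (hβ : ∀ φ : ℝ, β φ =
      (Real.sqrt (6 * c ^ 2 - 18) + Real.sqrt (-9 * φ ^ 2 + 6 * c * φ + 5 * c ^ 2 - 18))
        / (c - 3 * φ))
    (hG : ∀ φ : ℝ, G φ = Real.pi / 2 + Real.arctan (α φ)
      + (2 * c / Real.sqrt (6 * c ^ 2 - 18)) * Real.log (β φ)) :
    ∀ φ ∈ Set.Ioo φm (c / 3),
      HasDerivAt G
        ((φ - c) / ((φ - c / 3) *
          Real.sqrt (-φ ^ 2 + (2 * c / 3) * φ + 5 * c ^ 2 / 9 - 2))) φ := by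
  rintro φ ⟨hlo, hhi⟩
  set d := √(6 * c ^ 2 - 18)
  have hd : 0 < d := by linarith
  have hd2 : d ^ 2 = 6 * c ^ 2 - 18 := sq_sqrt (sqrt_pos.mp hd).le
  have hquad (x : ℝ) : -9 * x ^ 2 + 6 * c * x + 5 * c ^ 2 - 18 = d ^ 2 - (3 * x - c) ^ 2 := by
    rw [hd2]; ring
  have hGeq : G = fun x => π / 2 + arctan ((3 * x - c) / √(d ^ 2 - (3 * x - c) ^ 2))
      + 2 * c / d * log ((d + √(d ^ 2 - (c - 3 * x) ^ 2)) / (c - 3 * x)) := by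
    funext x
    rw [hG, hα, hβ, hquad, sub_sq_comm c]
  have hu : 0 < c - 3 * φ := by linarith
  have hud : (c - 3 * φ) ^ 2 < d ^ 2 := by nlinarith
  have htd : (3 * φ - c) ^ 2 < d ^ 2 := sub_sq_comm c (3 * φ) ▸ hud
  have hs : √(d ^ 2 - (3 * φ - c) ^ 2) ≠ 0 := (sqrt_pos.mpr (sub_pos.mpr htd)).ne'
  have hlin : HasDerivAt (fun x => 3 * x - c) 3 φ := by
    simpa using ((hasDerivAt_id' φ).const_mul 3).sub_const c
  have hlin' : HasDerivAt (fun x => c - 3 * x) (-3) φ := by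
    simpa using ((hasDerivAt_id' φ).const_mul 3).const_sub c
  have harctan := (hasDerivAt_arctan_div_sqrt_sq_sub htd).comp φ hlin
  have hlog := (hasDerivAt_log_sqrt_sq_sub_div hu.ne' hud).comp φ hlin'
  rw [hGeq]
  refine ((harctan.const_add (π / 2)).add (hlog.const_mul (2 * c / d))).congr_deriv ?_
  have hsqrt :
      √(-φ ^ 2 + 2 * c / 3 * φ + 5 * c ^ 2 / 9 - 2) = √(d ^ 2 - (3 * φ - c) ^ 2) / 3 := by
    rw [show -φ ^ 2 + 2 * c / 3 * φ + 5 * c ^ 2 / 9 - 2 = (d ^ 2 - (3 * φ - c) ^ 2) / 3 ^ 2 by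
      rw [hd2]; ring, sqrt_div' _ (by positivity), sqrt_sq (by norm_num)]
  rw [hsqrt, sub_sq_comm c]
  have hφ : φ - c / 3 ≠ 0 := by linarith
  have h3 : 3 * φ - c ≠ 0 := by linarith
  field_simp
  ring

/-- For `√3 < c < 3`, the function
`G(φ) = π/2 + arctan(α(φ)) + (2c/√(6c² - 18)) ln(β(φ))`, where
`α(φ) = (3φ - c)/√(-9φ² + 6cφ + 5c² - 18)` and
`β(φ) = (√(6c² - 18) + √(-9φ² + 6cφ + 5c² - 18))/(c - 3φ)`, is differentiable
on `(φ₋, c/3)` with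
`G'(φ) = (φ - c)/((φ - c/3)√(-φ² + (2c/3)φ + 5c²/9 - 2))`. -/
theorem stmt_17 (c : ℝ) (hc1 : Real.sqrt 3 < c) (hc2 : c < 3)
    (φm : ℝ) (hφm : φm = (c - Real.sqrt (6 * c ^ 2 - 18)) / 3)
    (α β G : ℝ → ℝ)
    (hα : ∀ φ : ℝ, α φ =
      (3 * φ - c) / Real.sqrt (-9 * φ ^ 2 + 6 * c * φ + 5 * c ^ 2 - 18))
    (hβ : ∀ φ : ℝ, β φ =
      (Real.sqrt (6 * c ^ 2 - 18) + Real.sqrt (-9 * φ ^ 2 + 6 * c * φ + 5 * c ^ 2 - 18))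
        / (c - 3 * φ))
    (hG : ∀ φ : ℝ, G φ = Real.pi / 2 + Real.arctan (α φ)
      + (2 * c / Real.sqrt (6 * c ^ 2 - 18)) * Real.log (β φ)) :
    ∀ φ ∈ Set.Ioo φm (c / 3),
      HasDerivAt G
        ((φ - c) / ((φ - c / 3) *
          Real.sqrt (-φ ^ 2 + (2 * c / 3) * φ + 5 * c ^ 2 / 9 - 2))) φ :=
  stmt_17_general c φm hφm α β G hα hβ hG
end
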